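/- arXiv:2603.21777 — 4 statements merged into one kernel-verified Lean document; each statement's English description precedes it below -/
import Mathlib

section
/- Let β, a be real numbers with β > 0 and a ≠ 0. Then every complex root z of the quasipolynomial Q̃(z) = z² + β + a·exp(−z) satisfies Re z < 0 if and only if there exists a nonnegative integer k such that 0 < (−1)^{k+1} a < min(β − k²π², (k+1)²π² − β). -/
open Real Complex Filter Topology

section helpers
lemma cos_nat_pi' (m : ℕ) : Real.cos (m * π) = (-1)^m := by
  simpa using Real.cos_nat_mul_pi_sub 0 m

lemma sin_shift (Y : ℝ) (k : ℕ) : Real.sin Y = (-1)^k * Real.sin (Y - k*π) := by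
  have := Real.sin_add_int_mul_pi (Y - k*π) k
  rw [zpow_natCast] at this
  push_cast at this
  simp only [sub_add_cancel] at this
  linarith [this]

set_option maxHeartbeats 1000000 in
lemma back_core (β a c : ℝ) (hβ : 0 < β) (k : ℕ)
    (hsc : a = (-1)^(k+1) * c) (hc : 0 < c)
    (h1 : c < β - (k:ℝ)^2*π^2) (h2 : c < ((k:ℝ)+1)^2*π^2 - β)
    (x Y : ℝ) (hx : 0 ≤ x) (hY : 0 ≤ Y)
    (hre : x^2 - Y^2 + β + a * Real.exp (-x) * Real.cos Y = 0)
    (him : 2*x*Y - a * Real.exp (-x) * Real.sin Y = 0) : False := by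
  have hπ : (3:ℝ) < π := Real.pi_gt_three
  have hek : Real.exp (-x) ≤ 1 := Real.exp_le_one_iff.2 (by linarith)
  have hepos : 0 < Real.exp (-x) := Real.exp_pos _
  have hsq : ((-1:ℝ)^(k+1))^2 = 1 := by
    rcases Nat.even_or_odd (k+1) with h | h
    · rw [h.neg_one_pow]; ring
    · rw [h.neg_one_pow]; ring
  have ha2 : a^2 = c^2 := by rw [hsc]; nlinarith [hsq]
  have haabs : -c ≤ a ∧ a ≤ c := by
    constructor <;> (rw [hsc]; rcases Nat.even_or_odd (k+1) with h | h <;>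
      simp [h.neg_one_pow, Odd.neg_one_pow] <;> linarith)
  rcases eq_or_lt_of_le hY with hY0 | hYpos
  · -- Y = 0
    rw [← hY0] at hre
    simp [Real.cos_zero] at hre
    nlinarith [haabs.1, haabs.2]
  rcases eq_or_lt_of_le hx with hx0 | hxpos
  · -- x = 0
    rw [← hx0] at hre him
    simp [Real.exp_zero] at hre him
    have hsY : Real.sin Y = 0 := by
      rcases him with h | h
      · exfalso; rw [h] at ha2; simp at ha2; nlinarith
      · exact h
    obtain ⟨n, hn⟩ := Real.sin_eq_zero_iff.1 hsY
    have hn0 : 0 < n := by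
      by_contra h
      push_neg at h
      have : (n:ℝ) * π ≤ 0 := mul_nonpos_of_nonpos_of_nonneg (by exact_mod_cast h) Real.pi_pos.le
      linarith
    have hcast : ((n.toNat : ℕ) : ℝ) = (n : ℝ) :=
      mod_cast congrArg (Int.cast : ℤ → ℝ) (Int.toNat_of_nonneg hn0.le)
    set m : ℕ := n.toNat with hm
    have hYm : Y = m * π := by rw [← hn, hcast]
    have hm1 : 1 ≤ m := by omega
    rw [hYm, cos_nat_pi'] at hre
    -- hre : -(m π)² + β + a (-1)^m = 0  (plus 0^2 term)
    have key : a * (-1)^m = (m:ℝ)^2*π^2 - β := by nlinarith [hre]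
    have hbound : -c ≤ (m:ℝ)^2*π^2 - β ∧ (m:ℝ)^2*π^2 - β ≤ c := by
      rcases Nat.even_or_odd m with h | h
      · rw [h.neg_one_pow, mul_one] at key
        exact ⟨by linarith [haabs.1], by linarith [haabs.2]⟩
      · rw [h.neg_one_pow] at key
        have key' : -a = (m:ℝ)^2*π^2 - β := by linarith [key]
        exact ⟨by linarith [haabs.2], by linarith [haabs.1]⟩
    rcases le_or_gt m k with hmk | hmk
    · have hmk' : (m:ℝ) ≤ (k:ℝ) := by exact_mod_cast hmk
      have : (m:ℝ)^2*π^2 ≤ (k:ℝ)^2*π^2 :=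
        mul_le_mul_of_nonneg_right (pow_le_pow_left₀ (Nat.cast_nonneg m) hmk' 2) (sq_nonneg π)
      linarith [hbound.1]
    · have hmk' : (k:ℝ)+1 ≤ (m:ℝ) := by exact_mod_cast hmk
      have : ((k:ℝ)+1)^2*π^2 ≤ (m:ℝ)^2*π^2 :=
        mul_le_mul_of_nonneg_right (pow_le_pow_left₀ (by positivity) hmk' 2) (sq_nonneg π)
      linarith [hbound.2]
  · -- x > 0, Y > 0
    have hkey : (2*x*Y)^2 + (x^2-Y^2+β)^2 = c^2 * Real.exp (-x)^2 := by
      have hsc2 := Real.sin_sq_add_cos_sq Y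
      linear_combination (2*x*Y + a*Real.exp (-x)*Real.sin Y) * him +
        (x^2-Y^2+β - a*Real.exp (-x)*Real.cos Y) * hre +
        (a^2*Real.exp (-x)^2) * hsc2 + Real.exp (-x)^2 * ha2
    have hce : 0 < c * Real.exp (-x) := by positivity
    have e1 : 2*x*Y ≤ c * Real.exp (-x) := by
      have h4 : (2*x*Y)^2 ≤ (c*Real.exp (-x))^2 := by nlinarith [sq_nonneg (x^2-Y^2+β)]
      have h5 := Real.sqrt_le_sqrt h4
      rwa [Real.sqrt_sq (by positivity), Real.sqrt_sq hce.le] at h5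
    have e23 : |x^2 - Y^2 + β| ≤ c * Real.exp (-x) := by
      have h4 : (x^2-Y^2+β)^2 ≤ (c*Real.exp (-x))^2 := by nlinarith [sq_nonneg (2*x*Y)]
      have h5 := Real.sqrt_le_sqrt h4
      rwa [Real.sqrt_sq_eq_abs, Real.sqrt_sq hce.le] at h5
    have e2 : x^2 - Y^2 + β ≤ c * Real.exp (-x) := (abs_le.1 e23).2
    have e3 : -(c * Real.exp (-x)) ≤ x^2 - Y^2 + β := (abs_le.1 e23).1
    have hcce : c * Real.exp (-x) ≤ c := by nlinarith
    rcases lt_or_ge Y (((k:ℝ)+1)*π) with hYlt | hYge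
    · -- kπ < Y < (k+1)π
      have hY2 : (k:ℝ)^2*π^2 < Y^2 := by nlinarith [mul_nonneg hx hx]
      have hYk : (k:ℝ)*π < Y := by nlinarith [mul_nonneg (Nat.cast_nonneg (α := ℝ) k) Real.pi_pos.le]
      have hspos : 0 < Real.sin (Y - k*π) :=
        Real.sin_pos_of_pos_of_lt_pi (by linarith) (by nlinarith)
      have hsin : Real.sin Y = (-1)^k * Real.sin (Y - k*π) := sin_shift Y k
      have hpow : (-1:ℝ)^(k+1) * (-1)^k = -1 := by
        rw [← pow_add]; exact Odd.neg_one_pow ⟨k, by omega⟩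
      have hneg : a * Real.sin Y = -(c * Real.sin (Y - k*π)) := by
        rw [hsc, hsin]
        linear_combination (c * Real.sin (Y - k*π)) * hpow
      have him2 : 2*x*Y = Real.exp (-x) * (a * Real.sin Y) := by linear_combination him
      rw [hneg] at him2
      nlinarith [mul_pos hepos (mul_pos hc hspos), mul_pos hxpos hYpos]
    · -- Y ≥ (k+1)π
      have hkπ : (0:ℝ) ≤ ((k:ℝ)+1)*π := by positivity
      have hY2 : ((k:ℝ)+1)^2*π^2 ≤ Y^2 := by
        nlinarith [mul_le_mul hYge hYge hkπ hY]
      have hx2 : c*(1 - Real.exp (-x)) < x^2 := by nlinarith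
      have h1x : (0:ℝ) < 1 + x := by linarith
      have hexp1 : (1+x) * Real.exp (-x) ≤ 1 := by
        rw [Real.exp_neg, ← div_eq_mul_inv, div_le_one (Real.exp_pos x)]
        linarith [Real.add_one_le_exp x]
      have hxx : c < x*(1+x) := by
        have m1 := mul_lt_mul_of_pos_right hx2 h1x
        have m2 := mul_le_mul_of_nonneg_left hexp1 hc.le
        have hcx : c * x < x^2 * (1+x) := by linarith [m1, m2]
        nlinarith [hcx, hxpos]
      have hY3 : 3 < Y := by nlinarith [Nat.cast_nonneg (α := ℝ) k, Real.pi_pos]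
      have hbig : 2*x*Y*(1+x) ≤ c := by
        have s1 : 2*x*Y*(1+x) ≤ (c*Real.exp (-x))*(1+x) := mul_le_mul_of_nonneg_right e1 h1x.le
        have s2 : c*((1+x)*Real.exp (-x)) ≤ c*1 := mul_le_mul_of_nonneg_left hexp1 hc.le
        linarith [s1, s2]
      have hpos6 : 0 ≤ (Y - 3) * (x * (1+x)) :=
        mul_nonneg (by linarith) (by positivity)
      linarith [hpos6, hbig, hxx, mul_pos hxpos h1x]

lemma root_build (x y β a : ℝ)
    (h1 : x^2 - y^2 + β + a * Real.exp (-x) * Real.cos y = 0)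
    (h2 : 2*x*y - a * Real.exp (-x) * Real.sin y = 0) :
    (x + y*I) ^ 2 + (β : ℂ) + (a : ℂ) * Complex.exp (-(x + y*I)) = 0 := by
  rw [Complex.ext_iff]
  constructor <;>
  · simp [pow_two, Complex.mul_re, Complex.mul_im, Complex.exp_re, Complex.exp_im]
    ring_nf at h1 h2 ⊢
    linarith

lemma rootT0 (β a : ℝ) (n : ℕ) (h : a * (-1)^n = (n:ℝ)^2*π^2 - β) :
    ∃ z : ℂ, z ^ 2 + (β : ℂ) + (a : ℂ) * Complex.exp (-z) = 0 ∧ 0 ≤ z.re := by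
  have h1 : (0:ℝ)^2 - ((n:ℝ)*π)^2 + β + a * Real.exp (-0) * Real.cos ((n:ℝ)*π) = 0 := by
    rw [cos_nat_pi']
    simp only [neg_zero, Real.exp_zero]
    nlinarith [h]
  have h2 : 2*0*((n:ℝ)*π) - a * Real.exp (-0) * Real.sin ((n:ℝ)*π) = 0 := by
    rw [Real.sin_nat_mul_pi]
    ring
  exact ⟨_, root_build 0 ((n:ℝ)*π) β a h1 h2, by simp⟩

lemma rootT1 (β a : ℝ) (hβ : 0 < β) (h : a ≤ -β) :
    ∃ z : ℂ, z ^ 2 + (β : ℂ) + (a : ℂ) * Complex.exp (-z) = 0 ∧ 0 ≤ z.re := by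
  set f : ℝ → ℝ := fun x => x^2 + β + a * Real.exp (-x) with hf
  have hcont : Continuous f := by fun_prop
  have hX : (0:ℝ) ≤ Real.sqrt (-a) := Real.sqrt_nonneg _
  have hf0 : f 0 ≤ 0 := by simp [hf]; linarith
  have hfX : 0 ≤ f (Real.sqrt (-a)) := by
    have h1 : Real.sqrt (-a) ^ 2 = -a := Real.sq_sqrt (by linarith)
    have h2 : Real.exp (-Real.sqrt (-a)) ≤ 1 := Real.exp_le_one_iff.2 (by linarith)
    have h3 : a * Real.exp (-Real.sqrt (-a)) ≥ a := by nlinarith [Real.exp_pos (-Real.sqrt (-a))]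
    simp only [hf]
    nlinarith
  obtain ⟨x₀, hx₀mem, hx₀⟩ := intermediate_value_Icc hX hcont.continuousOn ⟨hf0, hfX⟩
  refine ⟨(x₀ : ℂ), ?_, by simpa using hx₀mem.1⟩
  have key : ((x₀:ℂ))^2 + (β:ℂ) + (a:ℂ) * Complex.exp (-(x₀:ℂ)) = ((f x₀ : ℝ) : ℂ) := by
    rw [hf]
    push_cast [Complex.ofReal_exp]
    ring
  rw [key, hx₀, Complex.ofReal_zero]

set_option maxHeartbeats 1000000 in
lemma lemA (β a : ℝ) (hβ : 0 < β) (n : ℕ) (hc : 0 < (-1:ℝ)^n * a)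
    (h1 : (n:ℝ)^2*π^2 < β + (-1:ℝ)^n*a) (h2 : β - (-1:ℝ)^n*a < ((n:ℝ)+1)^2*π^2) :
    ∃ z : ℂ, z ^ 2 + (β : ℂ) + (a : ℂ) * Complex.exp (-z) = 0 ∧ 0 ≤ z.re := by
  have hπ := Real.pi_pos
  set c : ℝ := (-1:ℝ)^n * a with hcdef
  have hsq : ((-1:ℝ)^n)^2 = 1 := by
    rcases Nat.even_or_odd n with h | h
    · rw [h.neg_one_pow]; ring
    · rw [h.neg_one_pow]; ring
  have hac : a = (-1:ℝ)^n * c := by rw [hcdef]; linear_combination -a * hsq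
  set J : Set ℝ := Set.Ioo ((n:ℝ)*π) (((n:ℝ)+1)*π) with hJ
  have hJopen : IsOpen J := isOpen_Ioo
  have hnn : (0:ℝ) ≤ (n:ℝ)*π := by positivity
  -- positivity of a * sin y on J
  have hsinpos : ∀ y ∈ J, 0 < a * Real.sin y := by
    intro y hy
    have hs : 0 < Real.sin (y - n*π) :=
      Real.sin_pos_of_pos_of_lt_pi (by have := hy.1; simp only [hJ, Set.mem_Ioo] at hy; linarith [hy.1])
        (by simp only [hJ, Set.mem_Ioo] at hy; linarith [hy.2])
    rw [sin_shift y n, hac]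
    calc 0 < c * Real.sin (y - n*π) := by positivity
      _ = (-1:ℝ)^n * c * ((-1:ℝ)^n * Real.sin (y - n*π)) := by linear_combination (-(c * Real.sin (y - n*π))) * hsq
  -- the imaginary-part function
  set ψ : ℝ → ℝ → ℝ := fun y x => 2*x*y - a * Real.exp (-x) * Real.sin y with hψ
  have hψcont : ∀ y, Continuous (ψ y) := by intro y; fun_prop
  have hmono : ∀ y ∈ J, ∀ x1 x2 : ℝ, x1 < x2 → ψ y x1 < ψ y x2 := by
    intro y hy x1 x2 hlt
    have hy0 : 0 < y := lt_of_le_of_lt hnn hy.1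
    have hsy := hsinpos y hy
    have he : Real.exp (-x2) < Real.exp (-x1) := Real.exp_lt_exp.2 (by linarith)
    simp only [hψ]
    nlinarith [mul_lt_mul_of_pos_left he hsy]
  -- uniqueness of nonneg zero
  have huni : ∀ y ∈ J, ∀ x1 x2 : ℝ, ψ y x1 = 0 → ψ y x2 = 0 → x1 = x2 := by
    intro y hy x1 x2 e1 e2
    rcases lt_trichotomy x1 x2 with h | h | h
    · exact absurd (hmono y hy x1 x2 h) (by rw [e1, e2]; simp)
    · exact h
    · exact absurd (hmono y hy x2 x1 h) (by rw [e1, e2]; simp)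
  -- existence
  set Xb : ℝ → ℝ := fun y => a * Real.sin y / (2*y) with hXb
  have hex : ∀ y : ℝ, ∃ x : ℝ, y ∈ J → (0 < x ∧ x < Xb y ∧ ψ y x = 0) := by
    intro y
    by_cases hy : y ∈ J
    swap
    · exact ⟨0, fun h => absurd h hy⟩
    have hy0 : 0 < y := lt_of_le_of_lt hnn hy.1
    have hsy := hsinpos y hy
    have hXbpos : 0 < Xb y := by rw [hXb]; positivity
    have hl : ψ y 0 < 0 := by simp only [hψ]; simp; nlinarith [hsy]
    have hr : 0 < ψ y (Xb y) := by
      have h5 : 2 * Xb y * y = a * Real.sin y := by rw [hXb]; field_simp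
      have h6 : Real.exp (-Xb y) < 1 := Real.exp_lt_one_iff.2 (by linarith)
      simp only [hψ]
      rw [h5]
      nlinarith [h6, hsy]
    have := intermediate_value_Ioo (le_of_lt hXbpos) (hψcont y).continuousOn
      (Set.mem_Ioo.2 ⟨hl, hr⟩)
    obtain ⟨x, hxmem, hx⟩ := this
    exact ⟨x, fun _ => ⟨hxmem.1, hxmem.2, hx⟩⟩
  choose xh hxh using hex
  -- continuity of xh on J
  have hcontxh : ∀ y₀ ∈ J, ContinuousAt xh y₀ := by
    intro y₀ hy₀
    obtain ⟨hx0pos, hx0lt, hx0eq⟩ := hxh y₀ hy₀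
    rw [Metric.continuousAt_iff]
    intro ε hε
    set ε' : ℝ := min ε (xh y₀) with hε'
    have hε'pos : 0 < ε' := lt_min hε hx0pos
    have hll : 0 ≤ xh y₀ - ε'/2 := by
      have : ε' ≤ xh y₀ := min_le_right _ _
      linarith
    have hlneg : ψ y₀ (xh y₀ - ε'/2) < 0 := by
      have := hmono y₀ hy₀ (xh y₀ - ε'/2) (xh y₀) (by linarith)
      rw [hx0eq] at this; linarith
    have hrpos : 0 < ψ y₀ (xh y₀ + ε'/2) := by
      have := hmono y₀ hy₀ (xh y₀) (xh y₀ + ε'/2) (by linarith)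
      rw [hx0eq] at this; linarith
    -- the set of y where signs persist and y ∈ J is open
    have hcl : Continuous (fun y => ψ y (xh y₀ - ε'/2)) := by simp only [hψ]; fun_prop
    have hcr : Continuous (fun y => ψ y (xh y₀ + ε'/2)) := by simp only [hψ]; fun_prop
    set U : Set ℝ := {y | ψ y (xh y₀ - ε'/2) < 0} ∩ {y | 0 < ψ y (xh y₀ + ε'/2)} ∩ J with hU
    have hUopen : IsOpen U :=
      ((isOpen_lt hcl continuous_const).inter (isOpen_lt continuous_const hcr)).inter hJopen
    have hy₀U : y₀ ∈ U := ⟨⟨hlneg, hrpos⟩, hy₀⟩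
    obtain ⟨δ, hδpos, hδ⟩ := Metric.isOpen_iff.1 hUopen y₀ hy₀U
    refine ⟨δ, hδpos, fun {y} hyd => ?_⟩
    have hyU : y ∈ U := hδ hyd
    obtain ⟨⟨hyl, hyr⟩, hyJ⟩ := hyU
    simp only [Set.mem_setOf_eq] at hyl hyr
    obtain ⟨hxypos, hxylt, hxyeq⟩ := hxh y hyJ
    have hlow : xh y₀ - ε'/2 < xh y := by
      by_contra hcon
      push_neg at hcon
      rcases eq_or_lt_of_le hcon with he | hlt
      · rw [he] at hxyeq; linarith
      · have := hmono y hyJ (xh y) (xh y₀ - ε'/2) hlt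
        rw [hxyeq] at this; linarith
    have hhigh : xh y < xh y₀ + ε'/2 := by
      by_contra hcon
      push_neg at hcon
      rcases eq_or_lt_of_le hcon with he | hlt
      · rw [← he] at hxyeq; linarith
      · have := hmono y hyJ (xh y₀ + ε'/2) (xh y) hlt
        rw [hxyeq] at this; linarith
    have : |xh y - xh y₀| < ε' := by
      rw [abs_lt]; constructor <;> linarith
    calc dist (xh y) (xh y₀) = |xh y - xh y₀| := Real.dist_eq _ _
      _ < ε' := this
      _ ≤ ε := min_le_left _ _
  -- the real-part function along the curve
  set F : ℝ → ℝ := fun y => (xh y)^2 - y^2 + β + a * Real.exp (-(xh y)) * Real.cos y with hF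
  have hG : Continuous (fun p : ℝ × ℝ => p.1^2 - p.2^2 + β + a * Real.exp (-p.1) * Real.cos p.2) := by
    fun_prop
  have hFc : ∀ y ∈ J, ContinuousAt F y := by
    intro y hy
    have hx := hcontxh y hy
    have hpair : ContinuousAt (fun y => (xh y, y)) y := hx.prodMk continuousAt_id
    exact (hG.continuousAt).comp hpair
  -- right endpoint
  set b : ℝ := ((n:ℝ)+1)*π with hb
  have hab : (n:ℝ)*π < b := by rw [hb]; nlinarith [hπ]
  have hJL2 : J ∈ 𝓝[<] b := Ioo_mem_nhdsLT_of_mem ⟨hab, le_refl b⟩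
  have hsinb : Real.sin b = 0 := by
    have : b = ((n+1 : ℕ):ℝ)*π := by rw [hb]; push_cast; ring
    rw [this]; exact Real.sin_nat_mul_pi (n+1)
  have hXbb : Xb b = 0 := by rw [hXb]; simp [hsinb]
  have hXbcont : ContinuousAt Xb b := by
    have hb0 : (2:ℝ)*b ≠ 0 := by positivity
    rw [hXb]
    exact (continuousAt_const.mul Real.continuous_sin.continuousAt).div
      (continuousAt_const.mul continuousAt_id) hb0
  have hXblim : Tendsto Xb (𝓝[<] b) (𝓝 0) := by
    have := hXbcont.tendsto
    rw [hXbb] at this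
    exact this.mono_left nhdsWithin_le_nhds
  have hxh0R : Tendsto xh (𝓝[<] b) (𝓝 0) := by
    refine tendsto_of_tendsto_of_tendsto_of_le_of_le' tendsto_const_nhds hXblim ?_ ?_
    · filter_upwards [hJL2] with y hy using (hxh y hy).1.le
    · filter_upwards [hJL2] with y hy using (hxh y hy).2.1.le
  have hcosb : Real.cos b = (-1:ℝ)^(n+1) := by
    have : b = ((n+1 : ℕ):ℝ)*π := by rw [hb]; push_cast; ring
    rw [this, cos_nat_pi' (n+1)]
  have hb2 : b^2 = ((n:ℝ)+1)^2*π^2 := by rw [hb]; ring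
  have hFlimR : Tendsto F (𝓝[<] b) (𝓝 (β - b^2 - c)) := by
    have hpair : Tendsto (fun y => (xh y, y)) (𝓝[<] b) (𝓝 ((0:ℝ), b)) :=
      hxh0R.prodMk_nhds (tendsto_id.mono_left nhdsWithin_le_nhds)
    have h2 := (hG.tendsto ((0:ℝ), b)).comp hpair
    simp only [Function.comp] at h2
    have hval : (0:ℝ)^2 - b^2 + β + a * Real.exp (-(0:ℝ)) * Real.cos b = β - b^2 - c := by
      rw [hcosb]
      simp only [neg_zero, Real.exp_zero]
      rw [hcdef]
      ring
    rw [← hval]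
    exact h2
  have hvalR : β - b^2 - c < 0 := by rw [hb2]; linarith [h2]
  have hevR : ∀ᶠ y in 𝓝[<] b, F y < 0 := hFlimR.eventually_lt_const hvalR
  -- left endpoint: find y₁ ∈ J with 0 < F y₁
  have hy1 : ∃ y₁ ∈ J, 0 < F y₁ := by
    rcases Nat.eq_zero_or_pos n with hn0 | hn1
    · -- n = 0 : explicit point
      subst hn0
      set y₁ : ℝ := min (Real.sqrt β) π / 2 with hy₁def
      have hsβ : 0 < Real.sqrt β := Real.sqrt_pos.2 hβ
      have hy₁pos : 0 < y₁ := by rw [hy₁def]; positivity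
      have hy₁le : y₁ ≤ π/2 := by
        rw [hy₁def]; have := min_le_right (Real.sqrt β) π; linarith
      have hy₁J : y₁ ∈ J := by
        constructor
        · simpa using hy₁pos
        · simp only [Nat.cast_zero, zero_add, one_mul]
          linarith [hπ]
      have hy₁sq : y₁^2 ≤ β/4 := by
        have h5 : y₁ ≤ Real.sqrt β / 2 := by
          rw [hy₁def]; have := min_le_left (Real.sqrt β) π; linarith
        have h6 : y₁^2 ≤ (Real.sqrt β / 2)^2 := by nlinarith [hy₁pos]
        have h7 : (Real.sqrt β)^2 = β := Real.sq_sqrt hβ.le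
        nlinarith [h6, h7]
      have hcos : 0 ≤ Real.cos y₁ :=
        Real.cos_nonneg_of_mem_Icc ⟨by linarith [hy₁pos, Real.pi_pos], hy₁le⟩
      have ha0 : 0 < a := by
        have h8 : c = a := by rw [hcdef]; simp
        rw [← h8]; exact hc
      refine ⟨y₁, hy₁J, ?_⟩
      simp only [hF]
      nlinarith [mul_nonneg (mul_nonneg ha0.le (Real.exp_pos (-(xh y₁))).le) hcos, sq_nonneg (xh y₁)]
    · -- n ≥ 1 : limit argument at nπ
      set l : ℝ := (n:ℝ)*π with hl
      have hlpos : 0 < l := by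
        rw [hl]
        have h9 : (1:ℝ) ≤ (n:ℝ) := by exact_mod_cast hn1
        nlinarith [hπ]
      have hJL1 : J ∈ 𝓝[>] l := Ioo_mem_nhdsGT_of_mem ⟨le_refl l, hab⟩
      have hsinl : Real.sin l = 0 := by rw [hl]; exact Real.sin_nat_mul_pi n
      have hXbl : Xb l = 0 := by rw [hXb]; simp [hsinl]
      have hXbcontl : ContinuousAt Xb l := by
        have hl0 : (2:ℝ)*l ≠ 0 := by positivity
        rw [hXb]
        exact (continuousAt_const.mul Real.continuous_sin.continuousAt).div
          (continuousAt_const.mul continuousAt_id) hl0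
      have hXblim1 : Tendsto Xb (𝓝[>] l) (𝓝 0) := by
        have h10 := hXbcontl.tendsto
        rw [hXbl] at h10
        exact h10.mono_left nhdsWithin_le_nhds
      have hxh0L : Tendsto xh (𝓝[>] l) (𝓝 0) := by
        refine tendsto_of_tendsto_of_tendsto_of_le_of_le' tendsto_const_nhds hXblim1 ?_ ?_
        · filter_upwards [hJL1] with y hy using (hxh y hy).1.le
        · filter_upwards [hJL1] with y hy using (hxh y hy).2.1.le
      have hcosl : Real.cos l = (-1:ℝ)^n := by rw [hl, cos_nat_pi' n]
      have hl2 : l^2 = (n:ℝ)^2*π^2 := by rw [hl]; ring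
      have hFlimL : Tendsto F (𝓝[>] l) (𝓝 (β - l^2 + c)) := by
        have hpair : Tendsto (fun y => (xh y, y)) (𝓝[>] l) (𝓝 ((0:ℝ), l)) :=
          hxh0L.prodMk_nhds (tendsto_id.mono_left nhdsWithin_le_nhds)
        have h2' := (hG.tendsto ((0:ℝ), l)).comp hpair
        simp only [Function.comp] at h2'
        have hval : (0:ℝ)^2 - l^2 + β + a * Real.exp (-(0:ℝ)) * Real.cos l = β - l^2 + c := by
          rw [hcosl]
          simp only [neg_zero, Real.exp_zero]
          rw [hcdef]
          ring
        rw [← hval]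
        exact h2'
      have hvalL : 0 < β - l^2 + c := by rw [hl2]; linarith [h1]
      have hevL : ∀ᶠ y in 𝓝[>] l, 0 < F y := hFlimL.eventually_const_lt hvalL
      have hevJ : ∀ᶠ y in 𝓝[>] l, y ∈ J := eventually_of_mem hJL1 (fun y hy => hy)
      obtain ⟨y₁, hy₁F, hy₁J⟩ := (hevL.and hevJ).exists
      exact ⟨y₁, hy₁J, hy₁F⟩
  obtain ⟨y₁, hy₁J, hy₁F⟩ := hy1
  -- pick y₂ ∈ (y₁, b) with F y₂ < 0
  have hIoo : Set.Ioo y₁ b ∈ 𝓝[<] b := Ioo_mem_nhdsLT_of_mem ⟨hy₁J.2, le_refl b⟩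
  have hevI : ∀ᶠ y in 𝓝[<] b, y ∈ Set.Ioo y₁ b := eventually_of_mem hIoo (fun y hy => hy)
  have hevJ2 : ∀ᶠ y in 𝓝[<] b, y ∈ J := eventually_of_mem hJL2 (fun y hy => hy)
  obtain ⟨y₂, hy₂F, hy₂I, hy₂J⟩ := (hevR.and (hevI.and hevJ2)).exists
  -- IVT
  have hy12 : y₁ ≤ y₂ := hy₂I.1.le
  have hsub : Set.Icc y₁ y₂ ⊆ J := by
    intro t ht
    exact ⟨lt_of_lt_of_le hy₁J.1 ht.1, lt_of_le_of_lt ht.2 hy₂J.2⟩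
  have hFcon : ContinuousOn F (Set.Icc y₁ y₂) :=
    fun t ht => (hFc t (hsub ht)).continuousWithinAt
  have hmem0 : (0:ℝ) ∈ Set.Icc (F y₂) (F y₁) := ⟨hy₂F.le, hy₁F.le⟩
  obtain ⟨ys, hysmem, hysF⟩ := intermediate_value_Icc' hy12 hFcon hmem0
  have hysJ : ys ∈ J := hsub hysmem
  obtain ⟨hxspos, _, hxseq⟩ := hxh ys hysJ
  refine ⟨(xh ys : ℂ) + (ys : ℂ) * I, ?_, by simp [hxspos.le]⟩
  apply root_build
  · simpa only [hF] using hysF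
  · simpa only [hψ] using hxseq

end helpers

/-- Atay's lemma: all roots of the quasipolynomial
`Q̃(z) = z² + β + a·exp(−z)` lie in the open left half-plane
iff there is a nonnegative integer `k` with
`0 < (−1)^(k+1) a < min (β − k²π², (k+1)²π² − β)`. -/
theorem stmt_0 (β a : ℝ) (hβ : 0 < β) (ha : a ≠ 0) :
    (∀ z : ℂ, z ^ 2 + (β : ℂ) + (a : ℂ) * Complex.exp (-z) = 0 → z.re < 0) ↔
      ∃ k : ℕ, 0 < (-1 : ℝ) ^ (k + 1) * a ∧
        (-1 : ℝ) ^ (k + 1) * a <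
          min (β - (k : ℝ) ^ 2 * Real.pi ^ 2)
            (((k : ℝ) + 1) ^ 2 * Real.pi ^ 2 - β) := by
  constructor
  · -- forward direction
    intro hstable
    by_contra hn
    push_neg at hn
    have hπ := Real.pi_pos
    set K : ℕ := Nat.floor (Real.sqrt β / π) with hK
    have hsβ : 0 < Real.sqrt β := Real.sqrt_pos.2 hβ
    have hK1 : (K:ℝ) ≤ Real.sqrt β / π := Nat.floor_le (by positivity)
    have hK2 : Real.sqrt β / π < (K:ℝ) + 1 := Nat.lt_floor_add_one _
    have hsq : (Real.sqrt β)^2 = β := Real.sq_sqrt hβ.le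
    have hKβ1 : (K:ℝ)^2*π^2 ≤ β := by
      have h5 : (K:ℝ)*π ≤ Real.sqrt β := by
        rw [le_div_iff₀ hπ] at hK1
        exact hK1
      have h6 : (0:ℝ) ≤ (K:ℝ)*π := by positivity
      nlinarith [mul_le_mul h5 h5 h6 (Real.sqrt_nonneg β), hsq]
    have hKβ2 : β < ((K:ℝ)+1)^2*π^2 := by
      have h5 : Real.sqrt β < ((K:ℝ)+1)*π := by
        rw [div_lt_iff₀ hπ] at hK2
        linarith
      nlinarith [hsβ]
    -- find a root in the closed right half plane
    have hroot : ∃ z : ℂ, z ^ 2 + (β : ℂ) + (a : ℂ) * Complex.exp (-z) = 0 ∧ 0 ≤ z.re := by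
      have hsgn : ((-1:ℝ)^K)^2 = 1 := by
        rcases Nat.even_or_odd K with h | h
        · rw [h.neg_one_pow]; ring
        · rw [h.neg_one_pow]; ring
      rcases lt_trichotomy ((-1:ℝ)^K * a) 0 with hA | hA | hA
      · -- good sign : c := (-1)^(K+1) * a > 0
        have hcpos : 0 < (-1:ℝ)^(K+1) * a := by
          rw [pow_succ]; nlinarith [hA]
        set c : ℝ := (-1:ℝ)^(K+1) * a with hcdef
        have hmin := hn K hcpos
        have hanegc : a * (-1:ℝ)^K = -c := by
          rw [hcdef, pow_succ]; ring
        rcases min_le_iff.1 hmin with hcase | hcase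
        · rcases eq_or_lt_of_le hcase with heq | hlt
          · -- c = β - K²π² : root at iKπ
            exact rootT0 β a K (by rw [hanegc]; linarith)
          · rcases Nat.eq_zero_or_pos K with hK0 | hK1'
            · -- K = 0 and c > β : real root
              apply rootT1 β a hβ
              have hc0 : c = -a := by rw [hcdef, hK0]; ring
              have hβc : β < c := by
                rw [hK0] at hlt
                push_cast at hlt
                linarith
              linarith
            · -- K ≥ 1 : lemA with n = K - 1
              have hKm : ((K-1 : ℕ):ℝ) = (K:ℝ) - 1 := by
                have : (1:ℕ) ≤ K := hK1'
                push_cast [Nat.cast_sub this]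
                ring
              have hpow : (-1:ℝ)^(K-1) = (-1:ℝ)^(K+1) := by
                have h6 : K - 1 + 2 = K + 1 := by omega
                rw [← h6, pow_add]
                ring
              apply lemA β a hβ (K-1)
              · rw [hpow]; exact hcpos
              · rw [hpow, hKm]
                have h7 : ((K:ℝ)-1)^2*π^2 < (K:ℝ)^2*π^2 := by
                  have h8 : (1:ℝ) ≤ (K:ℝ) := by exact_mod_cast hK1'
                  nlinarith [hπ]
                linarith
              · rw [hpow, hKm]
                have h9 : (K:ℝ) - 1 + 1 = (K:ℝ) := by ring
                rw [h9]
                linarith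
        · rcases eq_or_lt_of_le hcase with heq | hlt
          · -- c = (K+1)²π² - β : root at i(K+1)π
            apply rootT0 β a (K+1)
            have : a * (-1:ℝ)^(K+1) = c := by rw [hcdef]; ring
            rw [this]
            push_cast
            linarith
          · -- c > (K+1)²π² - β : lemA with n = K+1
            apply lemA β a hβ (K+1)
            · exact hcpos
            · push_cast; linarith
            · push_cast
              have h10 : ((K:ℝ)+1)^2*π^2 < ((K:ℝ)+1+1)^2*π^2 := by
                nlinarith [Nat.cast_nonneg (α := ℝ) K, hπ]
              linarith
      · -- (-1)^K * a = 0 impossible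
        exfalso
        have : a = 0 := by
          rcases Nat.even_or_odd K with h | h
          · rw [h.neg_one_pow] at hA; linarith
          · rw [h.neg_one_pow] at hA; linarith
        exact ha this
      · -- bad sign : lemA with n = K
        apply lemA β a hβ K hA
        · linarith
        · linarith
    obtain ⟨z, hz, hre⟩ := hroot
    exact absurd (hstable z hz) (not_lt.2 hre)
  · -- backward direction
    rintro ⟨k, hc, hmin⟩ z hz
    by_contra hx
    push_neg at hx
    set x := z.re
    set y := z.im
    have hre : x^2 - y^2 + β + a * Real.exp (-x) * Real.cos y = 0 := by
      have := congrArg Complex.re hz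
      simp [pow_two, Complex.mul_re, Complex.mul_im, Complex.exp_re, Complex.exp_im] at this
      ring_nf at this ⊢
      linarith
    have him : 2*x*y - a * Real.exp (-x) * Real.sin y = 0 := by
      have := congrArg Complex.im hz
      simp [pow_two, Complex.mul_re, Complex.mul_im, Complex.exp_re, Complex.exp_im] at this
      ring_nf at this ⊢
      linarith
    have hsc : a = (-1:ℝ)^(k+1) * ((-1:ℝ)^(k+1) * a) := by
      have : ((-1:ℝ)^(k+1))^2 = 1 := by
        rcases Nat.even_or_odd (k+1) with h | h
        · rw [h.neg_one_pow]; ring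
        · rw [h.neg_one_pow]; ring
      linear_combination -a * this
    rcases le_or_gt 0 y with hy | hy
    · exact back_core β a _ hβ k hsc hc (lt_min_iff.1 hmin).1 (lt_min_iff.1 hmin).2 x y hx hy hre him
    · refine back_core β a _ hβ k hsc hc (lt_min_iff.1 hmin).1 (lt_min_iff.1 hmin).2 x (-y) hx
        (by linarith) ?_ ?_
      · rw [Real.cos_neg]; linarith [hre]
      · rw [Real.sin_neg]; linarith [him]
end

section
/- Let ℓ > 0, n a positive integer and α a nonzero real number. Then there exist a real number ω > 0 and a delay τ ≥ 0 such that (iω)² + n²π²/ℓ² + α·exp(−iωτ) = 0. Consequently, for every nonzero gain α there is a critical delay at which the characteristic quasipolynomial has a purely imaginary root, so uniform stability independent of the delay cannot be achieved. -/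
open Real Complex

/-- For every nonzero gain `α` there are a crossing frequency `ω > 0` and a
critical delay `τ ≥ 0` such that `iω` is a root of the characteristic
quasipolynomial: delay-independent stability cannot be achieved. -/
theorem stmt_4 (ℓ : ℝ) (hℓ : 0 < ℓ) (n : ℕ) (hn : 0 < n) (α : ℝ) (hα : α ≠ 0) :
    ∃ ω : ℝ, 0 < ω ∧ ∃ τ : ℝ, 0 ≤ τ ∧
      (Complex.I * (ω : ℂ)) ^ 2 + ((n : ℂ) ^ 2 * (Real.pi : ℂ) ^ 2 / (ℓ : ℂ) ^ 2) +
        (α : ℂ) * Complex.exp (-(Complex.I * (ω : ℂ)) * (τ : ℂ)) = 0 := by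
  set c : ℝ := (n : ℝ) ^ 2 * Real.pi ^ 2 / ℓ ^ 2 with hc
  have hcpos : 0 < c := by
    apply div_pos
    · positivity
    · positivity
  have hspos : 0 < c + |α| := by positivity
  set ω : ℝ := Real.sqrt (c + |α|) with hω
  have hωpos : 0 < ω := Real.sqrt_pos.mpr hspos
  have hωsq : (ω : ℝ) ^ 2 = c + |α| := Real.sq_sqrt hspos.le
  refine ⟨ω, hωpos, ?_⟩
  have hIω2 : (Complex.I * (ω : ℂ)) ^ 2 = -((ω ^ 2 : ℝ) : ℂ) := by
    push_cast
    ring_nf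
    simp [Complex.I_sq]
  have hcC : ((n : ℂ) ^ 2 * (Real.pi : ℂ) ^ 2 / (ℓ : ℂ) ^ 2) = ((c : ℝ) : ℂ) := by
    push_cast [hc]
    ring
  rcases hα.lt_or_gt with hneg | hpos
  · refine ⟨Real.pi / ω, by positivity, ?_⟩
    have hexp : Complex.exp (-(Complex.I * (ω : ℂ)) * ((Real.pi / ω : ℝ) : ℂ)) = -1 := by
      have : (-(Complex.I * (ω : ℂ)) * ((Real.pi / ω : ℝ) : ℂ)) = -((Real.pi : ℂ) * Complex.I) := by
        have hω0 : (ω : ℂ) ≠ 0 := by exact_mod_cast hωpos.ne'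
        push_cast
        field_simp
      rw [this, Complex.exp_neg, Complex.exp_pi_mul_I]
      norm_num
    rw [hexp, hIω2, hcC]
    have : (ω : ℝ) ^ 2 = c - α := by rw [hωsq, abs_of_neg hneg]; ring
    rw [this]
    push_cast
    ring
  · refine ⟨0, le_refl 0, ?_⟩
    simp only [Complex.ofReal_zero, mul_zero, Complex.exp_zero, mul_one]
    rw [hIω2, hcC]
    have : (ω : ℝ) ^ 2 = c + α := by rw [hωsq, abs_of_pos hpos]
    rw [this]
    push_cast
    ring
end

section
/- Let ℓ > 0, τ > 0, n a positive integer and α a nonzero real number, and suppose there exists a nonnegative integer k such that 0 < (−1)^{k+1} ℓ²τ²α < min(n²π²τ² − k²ℓ²π², (k+1)²ℓ²π² − n²π²τ²). Then there exists ε > 0 such that every complex root λ of Q_n(λ) = λ² + n²π²/ℓ² + α·exp(−λτ) satisfies Re λ ≤ −ε. -/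
open Real Complex

private lemma aux_sin_ge {c u : ℝ} (hc : 0 < c) (h1 : c ≤ u) (h2 : u ≤ π - c) :
    Real.sin c ≤ Real.sin u := by
  rcases le_or_gt u (π / 2) with h | h
  · exact Real.sin_le_sin_of_le_of_le_pi_div_two (by linarith [Real.pi_pos]) h h1
  · rw [← Real.sin_pi_sub u]
    exact Real.sin_le_sin_of_le_of_le_pi_div_two (by linarith [Real.pi_pos])
      (by linarith) (by linarith)

set_option maxHeartbeats 1000000 in
/-- Under condition (L), the roots of the quasipolynomial are uniformly
bounded away from the imaginary axis: there is `ε > 0` with `Re λ ≤ −ε`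
for every root `λ`. -/
theorem stmt_15 (ℓ τ : ℝ) (hℓ : 0 < ℓ) (hτ : 0 < τ) (n : ℕ) (hn : 0 < n)
    (α : ℝ) (hα : α ≠ 0)
    (hL : ∃ k : ℕ, 0 < (-1 : ℝ) ^ (k + 1) * (ℓ ^ 2 * τ ^ 2 * α) ∧
      (-1 : ℝ) ^ (k + 1) * (ℓ ^ 2 * τ ^ 2 * α) <
        min ((n : ℝ) ^ 2 * Real.pi ^ 2 * τ ^ 2 - (k : ℝ) ^ 2 * ℓ ^ 2 * Real.pi ^ 2)
          (((k : ℝ) + 1) ^ 2 * ℓ ^ 2 * Real.pi ^ 2 - (n : ℝ) ^ 2 * Real.pi ^ 2 * τ ^ 2)) :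
    ∃ ε : ℝ, 0 < ε ∧
      ∀ lam : ℂ,
        lam ^ 2 + ((n : ℂ) ^ 2 * (Real.pi : ℂ) ^ 2 / (ℓ : ℂ) ^ 2) +
            (α : ℂ) * Complex.exp (-lam * (τ : ℂ)) = 0 →
          lam.re ≤ -ε := by
  obtain ⟨k, h1, h2⟩ := hL
  rw [lt_min_iff] at h2
  obtain ⟨h2a, h2b⟩ := h2
  have hπ := Real.pi_pos
  have hℓ2 : (0:ℝ) < ℓ ^ 2 := pow_pos hℓ 2
  have hτ2 : (0:ℝ) < τ ^ 2 := pow_pos hτ 2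
  obtain ⟨A, hAdef⟩ : ∃ A : ℝ, A = (-1:ℝ) ^ (k+1) * α := ⟨_, rfl⟩
  have hee : ((-1:ℝ) ^ (k+1)) * ((-1:ℝ) ^ (k+1)) = 1 := by
    rw [← mul_pow]; norm_num
  have h1' : 0 < ℓ ^ 2 * τ ^ 2 * A := by
    have h : ℓ ^ 2 * τ ^ 2 * A = (-1:ℝ) ^ (k+1) * (ℓ ^ 2 * τ ^ 2 * α) := by
      rw [hAdef]; ring
    rw [h]; exact h1
  have hA0 : 0 < A := by nlinarith only [h1', mul_pos hℓ2 hτ2]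
  have hαA : α = (-1:ℝ) ^ (k+1) * A := by
    rw [hAdef, ← mul_assoc, hee, one_mul]
  have habs : |α| = A := by
    rw [hαA, abs_mul, abs_of_pos hA0]
    simp
  obtain ⟨W, hWdef⟩ : ∃ W : ℝ, W = (n:ℝ) ^ 2 * π ^ 2 / ℓ ^ 2 := ⟨_, rfl⟩
  obtain ⟨a, hadef⟩ : ∃ a : ℝ, a = (k:ℝ) * π / τ := ⟨_, rfl⟩
  obtain ⟨b, hbdef⟩ : ∃ b : ℝ, b = ((k:ℝ) + 1) * π / τ := ⟨_, rfl⟩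
  have hWnn : 0 ≤ W := by rw [hWdef]; positivity
  have ha0 : 0 ≤ a := by rw [hadef]; positivity
  have hb0 : 0 < b := by rw [hbdef]; positivity
  have eW : W * ℓ ^ 2 = (n:ℝ) ^ 2 * π ^ 2 := by
    rw [hWdef]; field_simp
  have ea : a ^ 2 * τ ^ 2 = (k:ℝ) ^ 2 * π ^ 2 := by
    rw [hadef]; field_simp
  have eb : b ^ 2 * τ ^ 2 = ((k:ℝ) + 1) ^ 2 * π ^ 2 := by
    rw [hbdef]; field_simp
  have h2a' : ℓ ^ 2 * τ ^ 2 * A < (n:ℝ) ^ 2 * π ^ 2 * τ ^ 2 - (k:ℝ) ^ 2 * ℓ ^ 2 * π ^ 2 := by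
    have h : ℓ ^ 2 * τ ^ 2 * A = (-1:ℝ) ^ (k+1) * (ℓ ^ 2 * τ ^ 2 * α) := by rw [hAdef]; ring
    rw [h]; exact h2a
  have h2b' : ℓ ^ 2 * τ ^ 2 * A < ((k:ℝ) + 1) ^ 2 * ℓ ^ 2 * π ^ 2 - (n:ℝ) ^ 2 * π ^ 2 * τ ^ 2 := by
    have h : ℓ ^ 2 * τ ^ 2 * A = (-1:ℝ) ^ (k+1) * (ℓ ^ 2 * τ ^ 2 * α) := by rw [hAdef]; ring
    rw [h]; exact h2b
  have haW : A + a ^ 2 < W := by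
    nlinarith only [h2a', eW, ea, mul_pos hℓ2 hτ2, hℓ2, hτ2]
  have hbW : W + A < b ^ 2 := by
    nlinarith only [h2b', eW, eb, mul_pos hℓ2 hτ2, hℓ2, hτ2]
  obtain ⟨δ, hδdef⟩ : ∃ δ : ℝ, δ = min (W - a ^ 2 - A) (b ^ 2 - W - A) := ⟨_, rfl⟩
  have hδ0 : 0 < δ := by
    rw [hδdef]; exact lt_min (by linarith only [haW]) (by linarith only [hbW])
  have hδ1 : δ ≤ W - a ^ 2 - A := by rw [hδdef]; exact min_le_left _ _
  have hδ2 : δ ≤ b ^ 2 - W - A := by rw [hδdef]; exact min_le_right _ _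
  obtain ⟨r1, hr1def⟩ : ∃ r1 : ℝ, r1 = τ * Real.sqrt (a ^ 2 + δ / 2) := ⟨_, rfl⟩
  obtain ⟨r2, hr2def⟩ : ∃ r2 : ℝ, r2 = τ * Real.sqrt (b ^ 2 - δ / 2) := ⟨_, rfl⟩
  have hτa : τ * a = (k:ℝ) * π := by rw [hadef]; field_simp
  have hτb : τ * b = ((k:ℝ) + 1) * π := by rw [hbdef]; field_simp
  have hr1 : (k:ℝ) * π < r1 := by
    rw [← hτa, hr1def]
    apply mul_lt_mul_of_pos_left _ hτ
    calc a = Real.sqrt (a ^ 2) := (Real.sqrt_sq ha0).symm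
    _ < Real.sqrt (a ^ 2 + δ / 2) := Real.sqrt_lt_sqrt (sq_nonneg a) (by linarith only [hδ0])
  have hr2 : r2 < ((k:ℝ) + 1) * π := by
    rw [← hτb, hr2def]
    apply mul_lt_mul_of_pos_left _ hτ
    calc Real.sqrt (b ^ 2 - δ / 2) < Real.sqrt (b ^ 2) :=
          Real.sqrt_lt_sqrt (by linarith only [hδ2, hδ0, hWnn, hA0]) (by linarith only [hδ0])
    _ = b := Real.sqrt_sq hb0.le
  obtain ⟨c, hcdef⟩ : ∃ c : ℝ,
      c = min (π / 2) (min (r1 - (k:ℝ) * π) (((k:ℝ) + 1) * π - r2)) := ⟨_, rfl⟩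
  have hc0 : 0 < c := by
    rw [hcdef]
    exact lt_min (by linarith only [hπ])
      (lt_min (by linarith only [hr1]) (by linarith only [hr2]))
  have hcπ2 : c ≤ π / 2 := by rw [hcdef]; exact min_le_left _ _
  have hc1 : c ≤ r1 - (k:ℝ) * π := by
    rw [hcdef]; exact le_trans (min_le_right _ _) (min_le_left _ _)
  have hc2 : c ≤ ((k:ℝ) + 1) * π - r2 := by
    rw [hcdef]; exact le_trans (min_le_right _ _) (min_le_right _ _)
  have hsinc : 0 < Real.sin c :=
    Real.sin_pos_of_pos_of_lt_pi hc0 (by linarith only [hcπ2, hπ])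
  have hlogpos : 0 < Real.log (1 + δ / (4 * A)) := by
    apply Real.log_pos
    have h : 0 < δ / (4 * A) := by positivity
    linarith only [h]
  obtain ⟨ε, hεdef⟩ : ∃ ε : ℝ, ε = min (min 1 (δ / 4))
      (min (Real.log (1 + δ / (4 * A)) / τ) (A * Real.sin c / (4 * b))) := ⟨_, rfl⟩
  have hε0 : 0 < ε := by
    rw [hεdef]
    apply lt_min (lt_min one_pos (by linarith only [hδ0]))
    exact lt_min (div_pos hlogpos hτ) (by positivity)
  have hε1 : ε ≤ 1 := by
    rw [hεdef]; exact le_trans (min_le_left _ _) (min_le_left _ _)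
  have hεδ : ε ≤ δ / 4 := by
    rw [hεdef]; exact le_trans (min_le_left _ _) (min_le_right _ _)
  have hεlog : ε ≤ Real.log (1 + δ / (4 * A)) / τ := by
    rw [hεdef]; exact le_trans (min_le_right _ _) (min_le_left _ _)
  have hεsin : ε ≤ A * Real.sin c / (4 * b) := by
    rw [hεdef]; exact le_trans (min_le_right _ _) (min_le_right _ _)
  refine ⟨ε, hε0, ?_⟩
  intro lam hroot
  by_contra hcon
  push_neg at hcon
  -- extract real and imaginary parts
  have hWc : ((n:ℂ) ^ 2 * (Real.pi : ℂ) ^ 2 / (ℓ:ℂ) ^ 2) = ((W:ℝ):ℂ) := by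
    rw [hWdef]; push_cast; ring
  rw [hWc, pow_two] at hroot
  have hre := congrArg Complex.re hroot
  have him := congrArg Complex.im hroot
  simp only [Complex.add_re, Complex.add_im, Complex.mul_re, Complex.mul_im,
    Complex.ofReal_re, Complex.ofReal_im, Complex.exp_re, Complex.exp_im,
    Complex.neg_re, Complex.neg_im, Complex.zero_re, Complex.zero_im,
    mul_zero, zero_mul, sub_zero, add_zero, zero_add, neg_mul, neg_zero,
    Real.cos_neg, Real.sin_neg, mul_neg] at hre him
  set x : ℝ := lam.re with hxdef
  set y : ℝ := lam.im with hydef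
  have e1 : x ^ 2 - y ^ 2 + W + α * (Real.exp (-(x * τ)) * Real.cos (y * τ)) = 0 := by
    linear_combination hre
  have e2 : 2 * (x * y) - α * (Real.exp (-(x * τ)) * Real.sin (y * τ)) = 0 := by
    linear_combination him
  obtain ⟨s, hsdef⟩ : ∃ s : ℝ, s = Real.exp (-(x * τ)) := ⟨_, rfl⟩
  rw [← hsdef] at e1 e2
  have hs0 : 0 < s := hsdef ▸ Real.exp_pos _
  obtain ⟨Y, hYdef⟩ : ∃ Y : ℝ, Y = |y| := ⟨_, rfl⟩
  have hY0 : 0 ≤ Y := hYdef ▸ abs_nonneg y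
  have e1' : x ^ 2 - Y ^ 2 + W + α * (s * Real.cos (Y * τ)) = 0 := by
    rcases abs_cases y with ⟨h, _⟩ | ⟨h, _⟩
    · rw [hYdef, h]; linear_combination e1
    · rw [hYdef, h, neg_mul, Real.cos_neg]; linear_combination e1
  have e2' : 2 * (x * Y) = α * (s * Real.sin (Y * τ)) := by
    rcases abs_cases y with ⟨h, _⟩ | ⟨h, _⟩
    · rw [hYdef, h]; linear_combination e2
    · rw [hYdef, h, neg_mul, Real.sin_neg]; linear_combination -e2
  have hPb : |α * (s * Real.cos (Y * τ))| ≤ A * s := by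
    rw [abs_mul, habs, abs_mul, abs_of_pos hs0]
    linarith only [mul_nonneg (mul_nonneg hA0.le hs0.le)
      (sub_nonneg.mpr (Real.abs_cos_le_one (Y * τ)))]
  obtain ⟨hP1, hP2⟩ := abs_le.mp hPb
  have hSeq : |α * (s * Real.sin (Y * τ))| = A * (s * |Real.sin (Y * τ)|) := by
    rw [abs_mul, habs, abs_mul, abs_of_pos hs0]
  have hxε : -ε < x := hcon
  rcases le_or_gt x 0 with hx0 | hx0
  · -- Branch 2: -ε < x ≤ 0
    have hs_ge1 : 1 ≤ s := by
      rw [hsdef]; exact Real.one_le_exp (by nlinarith only [hx0, hτ])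
    have hs_ub : s ≤ 1 + δ / (4 * A) := by
      rw [hsdef]
      calc Real.exp (-(x * τ)) ≤ Real.exp (ε * τ) := by
            apply Real.exp_le_exp.mpr; nlinarith only [hxε, hτ]
      _ ≤ Real.exp (Real.log (1 + δ / (4 * A))) := by
            apply Real.exp_le_exp.mpr
            exact (le_div_iff₀ hτ).mp hεlog
      _ = 1 + δ / (4 * A) := Real.exp_log (by positivity)
    have hAs : A * s ≤ A + δ / 4 := by
      calc A * s ≤ A * (1 + δ / (4 * A)) := mul_le_mul_of_nonneg_left hs_ub hA0.le
      _ = A + δ / 4 := by field_simp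
    have hx2 : x ^ 2 ≤ δ / 4 := by
      nlinarith only [hxε, hx0, hε1, hεδ, hε0]
    have hYub : Y ^ 2 ≤ b ^ 2 - δ / 2 := by
      linarith only [e1', hP2, hAs, hx2, hδ2]
    have hYlb : a ^ 2 + δ / 2 ≤ Y ^ 2 := by
      linarith only [e1', hP1, hAs, hδ1, hδ0, sq_nonneg x]
    have hYτ1 : r1 ≤ Y * τ := by
      rw [hr1def, mul_comm]
      apply mul_le_mul_of_nonneg_right _ hτ.le
      calc Real.sqrt (a ^ 2 + δ / 2) ≤ Real.sqrt (Y ^ 2) := Real.sqrt_le_sqrt hYlb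
      _ = Y := Real.sqrt_sq hY0
    have hYτ2 : Y * τ ≤ r2 := by
      rw [hr2def, mul_comm Y τ]
      apply mul_le_mul_of_nonneg_left _ hτ.le
      calc Y = Real.sqrt (Y ^ 2) := (Real.sqrt_sq hY0).symm
      _ ≤ Real.sqrt (b ^ 2 - δ / 2) := Real.sqrt_le_sqrt hYub
    have hsin_u : Real.sin c ≤ Real.sin (Y * τ - (k:ℝ) * π) :=
      aux_sin_ge hc0 (by linarith only [hc1, hYτ1]) (by linarith only [hc2, hYτ2])
    have hsin_eq : Real.sin (Y * τ - (k:ℝ) * π) = (-1:ℝ) ^ k * Real.sin (Y * τ) :=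
      Real.sin_sub_nat_mul_pi (Y * τ) k
    have hsin_abs : Real.sin c ≤ |Real.sin (Y * τ)| := by
      calc Real.sin c ≤ (-1:ℝ) ^ k * Real.sin (Y * τ) := by rw [← hsin_eq]; exact hsin_u
      _ ≤ |(-1:ℝ) ^ k * Real.sin (Y * τ)| := le_abs_self _
      _ = |Real.sin (Y * τ)| := by rw [abs_mul]; simp
    have habsx : |x| ≤ ε := abs_le.mpr ⟨by linarith only [hxε], by linarith only [hx0, hε0]⟩
    have hYb : Y ≤ b := by nlinarith only [hYub, hY0, hb0, hδ0]
    have hchain : A * (s * |Real.sin (Y * τ)|) ≤ 2 * ε * Y := by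
      calc A * (s * |Real.sin (Y * τ)|) = |α * (s * Real.sin (Y * τ))| := hSeq.symm
      _ = |2 * (x * Y)| := by rw [← e2']
      _ = 2 * (|x| * Y) := by rw [abs_mul, abs_mul, _root_.abs_of_nonneg hY0]; norm_num
      _ ≤ 2 * (ε * Y) := by nlinarith only [habsx, hY0]
      _ = 2 * ε * Y := by ring
    have hεb : ε * (4 * b) ≤ A * Real.sin c := (le_div_iff₀ (by positivity)).mp hεsin
    have hfinal : A * Real.sin c ≤ 2 * ε * Y := by
      calc A * Real.sin c ≤ A * (1 * |Real.sin (Y * τ)|) := by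
            nlinarith only [hsin_abs, hA0]
      _ ≤ A * (s * |Real.sin (Y * τ)|) := by
            linarith only [mul_nonneg (mul_nonneg hA0.le (sub_nonneg.mpr hs_ge1))
              (abs_nonneg (Real.sin (Y * τ)))]
      _ ≤ 2 * ε * Y := hchain
    nlinarith only [hεb, hfinal, hYb, hε0, hb0, mul_pos hε0 hb0]
  · -- Branch 1: 0 < x
    have hs_le1 : s ≤ 1 := by
      rw [hsdef]; exact Real.exp_le_one_iff.mpr (by nlinarith only [hx0, hτ])
    have hAs : A * s ≤ A := by nlinarith only [hs_le1, hA0]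
    have hmul : s * Real.exp (x * τ) = 1 := by
      rw [hsdef, ← Real.exp_add]
      simp
    have h1s : x * τ * s ≤ 1 - s := by
      nlinarith only [Real.add_one_le_exp (x * τ), hmul, hs0]
    have hY2pos : 0 < Y ^ 2 := by
      linarith only [e1', hP1, hAs, hδ1, hδ0, sq_nonneg x, sq_nonneg a]
    have hYpos : 0 < Y := by nlinarith only [hY2pos, hY0]
    have hsinYb : |Real.sin (Y * τ)| ≤ Y * τ := by
      calc |Real.sin (Y * τ)| ≤ |Y * τ| := Real.abs_sin_le_abs
      _ = Y * τ := abs_of_nonneg (by positivity)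
    have hxb : 2 * (x * Y) ≤ A * s * (Y * τ) := by
      calc 2 * (x * Y) = α * (s * Real.sin (Y * τ)) := e2'
      _ ≤ |α * (s * Real.sin (Y * τ))| := le_abs_self _
      _ = A * (s * |Real.sin (Y * τ)|) := hSeq
      _ ≤ A * (s * (Y * τ)) := by
            linarith only [mul_nonneg (mul_nonneg hA0.le hs0.le)
              (sub_nonneg.mpr hsinYb)]
      _ = A * s * (Y * τ) := by ring
    have hx_le : 2 * x ≤ A * s * τ := by nlinarith only [hxb, hYpos]
    have hx2 : x ^ 2 ≤ (A / 2) * (1 - s) := by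
      nlinarith only [hx_le, hx0, h1s, hA0]
    have hYub : Y ^ 2 < b ^ 2 := by
      linarith only [e1', hP2, hx2, hAs, hbW, hs_le1, hA0]
    have hYlb : a ^ 2 < Y ^ 2 := by
      linarith only [e1', hP1, hAs, hδ1, hδ0, sq_nonneg x]
    have haY : a < Y := by nlinarith only [hYlb, ha0, hY0]
    have hYb : Y < b := by nlinarith only [hYub, hY0, hb0]
    have hlo : (k:ℝ) * π < Y * τ := by
      rw [← hτa]; nlinarith only [haY, hτ]
    have hhi : Y * τ < ((k:ℝ) + 1) * π := by
      rw [← hτb]; nlinarith only [hYb, hτ]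
    have hsinpos : 0 < (-1:ℝ) ^ k * Real.sin (Y * τ) := by
      rw [← Real.sin_sub_nat_mul_pi (Y * τ) k]
      exact Real.sin_pos_of_pos_of_lt_pi (by linarith only [hlo]) (by linarith only [hhi])
    have hneg : α * (s * Real.sin (Y * τ)) < 0 := by
      rw [hαA, pow_succ]
      nlinarith only [mul_pos hA0 hs0, hsinpos]
    nlinarith only [mul_pos hx0 hYpos, e2', hneg]
end

section
/- Let ℓ > 0, τ > 0, n a positive integer and α a nonzero real number, and suppose there exists a nonnegative integer k such that 0 < (−1)^{k+1} ℓ²τ²α < min(n²π²τ² − k²ℓ²π², (k+1)²ℓ²π² − n²π²τ²). Then there exists ε > 0 with the following property: for every complex number λ satisfying λ² + n²π²/ℓ² + α·exp(−λτ) = 0 and every complex coefficient c, the modal solution u(x,t) = c·exp(λt)·sin(nπx/ℓ) of the delayed wave equation u_tt − u_xx + α·u(x, t−τ) = 0 with Dirichlet boundary conditions u(0,t) = u(ℓ,t) = 0 decays exponentially: |u(x,t)| ≤ |c|·exp(−εt) for all x ∈ [0,ℓ] and all t ≥ 0. -/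
open Real Complex

set_option maxHeartbeats 1000000 in
lemma key_decay (ω2 β τ : ℝ) (k : ℕ) (hτ : 0 < τ) (hβ : 0 < β)
    (hK : (k : ℝ) ^ 2 * Real.pi ^ 2 / τ ^ 2 < ω2 - β)
    (hP : ω2 + β < ((k : ℝ) + 1) ^ 2 * Real.pi ^ 2 / τ ^ 2) :
    ∃ ε : ℝ, 0 < ε ∧ ∀ σ y : ℝ,
      y ^ 2 - σ ^ 2 - ω2 = (-1 : ℝ) ^ (k + 1) * β * (Real.exp (-(σ * τ)) * Real.cos (y * τ)) →
      2 * σ * y = (-1 : ℝ) ^ (k + 1) * β * (Real.exp (-(σ * τ)) * Real.sin (y * τ)) →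
      σ ≤ -ε := by
  have hπ := Real.pi_pos
  have hτ2 : (0:ℝ) < τ ^ 2 := by positivity
  set K : ℝ := (k : ℝ) ^ 2 * Real.pi ^ 2 / τ ^ 2 with hKdef
  set P : ℝ := ((k : ℝ) + 1) ^ 2 * Real.pi ^ 2 / τ ^ 2 with hPdef
  have hK0 : 0 ≤ K := by positivity
  have hωβ : β < ω2 := by linarith
  set A : ℝ := ω2 - β - K with hAdef
  set B : ℝ := P - ω2 - β with hBdef
  have hA0 : 0 < A := by linarith
  have hB0 : 0 < B := by linarith
  set m : ℝ := min A B with hmdef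
  have hm0 : 0 < m := lt_min hA0 hB0
  have hmA : m ≤ A := min_le_left _ _
  have hmB : m ≤ B := min_le_right _ _
  have hKm : (0:ℝ) ≤ K + m / 2 := by linarith
  have hPm : (0:ℝ) ≤ P - m / 2 := by linarith
  set u : ℝ := τ * Real.sqrt (K + m / 2) with hudef
  set v : ℝ := τ * Real.sqrt (P - m / 2) with hvdef
  have hu0 : 0 ≤ u := by positivity
  have hv0 : 0 ≤ v := by positivity
  have hu2 : u ^ 2 = τ ^ 2 * (K + m / 2) := by
    rw [hudef, mul_pow, Real.sq_sqrt hKm]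
  have hv2 : v ^ 2 = τ ^ 2 * (P - m / 2) := by
    rw [hvdef, mul_pow, Real.sq_sqrt hPm]
  have hKτ : τ ^ 2 * K = (k : ℝ) ^ 2 * Real.pi ^ 2 := by
    rw [hKdef]; field_simp
  have hPτ : τ ^ 2 * P = ((k : ℝ) + 1) ^ 2 * Real.pi ^ 2 := by
    rw [hPdef]; field_simp
  have hkπ0 : (0:ℝ) ≤ (k:ℝ) * Real.pi := by positivity
  have hsqrtK : Real.sqrt K = (k : ℝ) * Real.pi / τ := by
    rw [show K = ((k:ℝ) * Real.pi / τ) ^ 2 by rw [hKdef]; ring]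
    exact Real.sqrt_sq (by positivity)
  have hsqrtP : Real.sqrt P = ((k : ℝ) + 1) * Real.pi / τ := by
    rw [show P = (((k:ℝ) + 1) * Real.pi / τ) ^ 2 by rw [hPdef]; ring]
    exact Real.sqrt_sq (by positivity)
  have hku : (k : ℝ) * Real.pi < u := by
    have h1 : Real.sqrt K < Real.sqrt (K + m / 2) := Real.sqrt_lt_sqrt hK0 (by linarith)
    have h2 := mul_lt_mul_of_pos_left h1 hτ
    rw [hsqrtK] at h2
    rw [hudef]
    calc (k:ℝ) * Real.pi = τ * ((k:ℝ) * Real.pi / τ) := by field_simp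
    _ < τ * Real.sqrt (K + m / 2) := h2
  have hvk : v < ((k : ℝ) + 1) * Real.pi := by
    have h1 : Real.sqrt (P - m / 2) < Real.sqrt P := by
      apply Real.sqrt_lt_sqrt hPm; linarith
    have h2 := mul_lt_mul_of_pos_left h1 hτ
    rw [hsqrtP] at h2
    rw [hvdef]
    calc τ * Real.sqrt (P - m / 2) < τ * (((k:ℝ)+1) * Real.pi / τ) := h2
    _ = ((k:ℝ)+1) * Real.pi := by field_simp
  have huv : u ≤ v := by
    have h1 : K + m / 2 ≤ P - m / 2 := by linarith
    exact mul_le_mul_of_nonneg_left (Real.sqrt_le_sqrt h1) hτ.le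
  have hk1π : ((k:ℝ)+1) * Real.pi = (k:ℝ)*Real.pi + Real.pi := by ring
  have hvπ : v - (k:ℝ) * Real.pi < Real.pi := by linarith
  have huπ : u - (k:ℝ) * Real.pi < Real.pi := by linarith
  set s0 : ℝ := min (Real.sin (u - (k:ℝ) * Real.pi)) (Real.sin (v - (k:ℝ) * Real.pi)) with hs0def
  have hs0 : 0 < s0 := by
    apply lt_min
    · exact Real.sin_pos_of_pos_of_lt_pi (by linarith) huπ
    · exact Real.sin_pos_of_pos_of_lt_pi (by linarith) hvπ
  set sP : ℝ := Real.sqrt P with hsPdef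
  have hsP0 : 0 ≤ sP := Real.sqrt_nonneg _
  set ε0 : ℝ := τ⁻¹ * Real.log (1 + m / (4 * β)) with hε0def
  have hε00 : 0 < ε0 := by
    apply mul_pos (by positivity)
    apply Real.log_pos
    have : 0 < m / (4 * β) := by positivity
    linarith
  set ε : ℝ := min ε0 (min (Real.sqrt m / 4) (β * s0 / (2 * sP + 1))) with hεdef
  have hε0 : 0 < ε := by
    apply lt_min hε00
    apply lt_min (by positivity) (by positivity)
  refine ⟨ε, hε0, ?_⟩
  intro σ y hA' hB'
  by_contra hcon
  push_neg at hcon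
  set r : ℝ := β * Real.exp (-(σ * τ)) with hrdef
  have hr0 : 0 < r := by positivity
  set c1 : ℝ := (-1 : ℝ) ^ (k + 1) with hc1def
  have hc1sq : c1 ^ 2 = 1 := by rw [hc1def, ← pow_mul, mul_comm, pow_mul]; norm_num
  have hc1cases : c1 = 1 ∨ c1 = -1 := by
    rcases Nat.even_or_odd (k + 1) with h | h
    · exact Or.inl (h.neg_one_pow)
    · exact Or.inr (h.neg_one_pow)
  have hc1k : c1 * (-1:ℝ)^k = -1 := by
    rw [hc1def, pow_succ]
    have h : ((-1:ℝ)^k)^2 = 1 := by rw [← pow_mul, mul_comm, pow_mul]; norm_num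
    linear_combination -h
  set Y : ℝ := |y| with hYdef
  have hY0 : 0 ≤ Y := abs_nonneg y
  have hAY : Y ^ 2 = σ ^ 2 + ω2 + c1 * r * Real.cos (Y * τ) := by
    rcases abs_cases y with ⟨h1, _⟩ | ⟨h1, _⟩
    · rw [hYdef, h1, hrdef, hc1def]; linear_combination hA'
    · rw [hYdef, h1, neg_mul, Real.cos_neg, hrdef, hc1def]; linear_combination hA'
  have hBY : 2 * σ * Y = c1 * r * Real.sin (Y * τ) := by
    rcases abs_cases y with ⟨h1, _⟩ | ⟨h1, _⟩
    · rw [hYdef, h1, hrdef, hc1def]; linear_combination hB'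
    · rw [hYdef, h1, neg_mul, Real.sin_neg, hrdef, hc1def]; linear_combination -hB'
  have hcos1 := Real.cos_le_one (Y * τ)
  have hcos2 := Real.neg_one_le_cos (Y * τ)
  have hsin1 := Real.sin_le_one (Y * τ)
  have hsin2 := Real.neg_one_le_sin (Y * τ)
  have hq1 : 0 ≤ r * (Real.cos (Y*τ) + 1) := mul_nonneg hr0.le (by linarith)
  have hq2 : 0 ≤ r * (1 - Real.cos (Y*τ)) := mul_nonneg hr0.le (by linarith)
  have hq3 : 0 ≤ r * (Real.sin (Y*τ) + 1) := mul_nonneg hr0.le (by linarith)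
  have hq4 : 0 ≤ r * (1 - Real.sin (Y*τ)) := mul_nonneg hr0.le (by linarith)
  have hlowY : σ ^ 2 + ω2 - r ≤ Y ^ 2 := by
    rcases hc1cases with h | h <;> rw [h] at hAY <;> linarith [hq1, hq2]
  have hhighY : Y ^ 2 ≤ σ ^ 2 + ω2 + r := by
    rcases hc1cases with h | h <;> rw [h] at hAY <;> linarith [hq1, hq2]
  rcases le_or_gt 0 σ with hσ0 | hσ0
  · -- the case σ ≥ 0 : direct contradiction
    have hrβ : r ≤ β := by
      have h1 : Real.exp (-(σ*τ)) ≤ 1 :=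
        Real.exp_le_one_iff.mpr (neg_nonpos.mpr (mul_nonneg hσ0 hτ.le))
      rw [hrdef]
      exact mul_le_of_le_one_right hβ.le h1
    have hYK : K < Y ^ 2 := by linarith [sq_nonneg σ]
    have hYτk : (k:ℝ) * Real.pi < Y * τ := by
      by_contra h
      push_neg at h
      have h2 : (Y*τ)^2 ≤ ((k:ℝ)*Real.pi)^2 :=
        pow_le_pow_left₀ (mul_nonneg hY0 hτ.le) h 2
      have h3 : K * τ^2 < Y^2 * τ^2 := mul_lt_mul_of_pos_right hYK hτ2
      linarith [hKτ]
    rcases lt_or_ge (Y*τ) (((k:ℝ)+1)*Real.pi) with hcase | hcase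
    · have hθ1 : 0 < Y*τ - (k:ℝ)*Real.pi := by linarith
      have hθ2 : Y*τ - (k:ℝ)*Real.pi < Real.pi := by linarith
      have hsin := Real.sin_add_nat_mul_pi (Y*τ - (k:ℝ)*Real.pi) k
      rw [sub_add_cancel] at hsin
      have hsθ : 0 < Real.sin (Y*τ - (k:ℝ)*Real.pi) :=
        Real.sin_pos_of_pos_of_lt_pi hθ1 hθ2
      have h2 : 2*σ*Y = -(r * Real.sin (Y*τ - (k:ℝ)*Real.pi)) := by
        rw [hBY, hsin]
        linear_combination r * Real.sin (Y*τ - (k:ℝ)*Real.pi) * hc1k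
      linarith [mul_nonneg hσ0 hY0, mul_pos hr0 hsθ]
    · have hYP : P ≤ Y ^ 2 := by
        have h2 : (((k:ℝ)+1)*Real.pi)^2 ≤ (Y*τ)^2 :=
          pow_le_pow_left₀ (by positivity) hcase 2
        have h4 : τ^2 * P ≤ τ^2 * Y^2 := by linarith [hPτ]
        exact le_of_mul_le_mul_left h4 hτ2
      have hσ2 : B + β - r ≤ σ ^ 2 := by linarith
      have hrY : 2*σ*Y ≤ r := by
        rcases hc1cases with h | h <;> rw [h] at hBY <;> linarith [hq3, hq4]
      have hexp1 : σ*τ*r ≤ β - r := by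
        have hE := Real.exp_pos (-(σ*τ))
        have h1 := Real.add_one_le_exp (σ*τ)
        have h2 : Real.exp (-(σ*τ)) * Real.exp (σ*τ) = 1 := by
          rw [← Real.exp_add]; simp
        have h5 : Real.exp (-(σ*τ)) * (σ*τ+1) ≤ 1 := by
          calc Real.exp (-(σ*τ)) * (σ*τ+1) ≤ Real.exp (-(σ*τ)) * Real.exp (σ*τ) :=
            mul_le_mul_of_nonneg_left h1 hE.le
          _ = 1 := h2
        have h6 := mul_le_mul_of_nonneg_left h5 hβ.le
        rw [hrdef]
        linarith [h6]
      have hπYτ : Real.pi ≤ Y*τ := by linarith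
      have h3 : σ*τ*(2*σ*Y) ≤ σ*τ*r :=
        mul_le_mul_of_nonneg_left hrY (mul_nonneg hσ0 hτ.le)
      have h4 : 2*σ^2*Real.pi ≤ σ*τ*(2*σ*Y) := by
        have h5 : 0 ≤ σ^2 * (Y*τ - Real.pi) := mul_nonneg (sq_nonneg σ) (by linarith)
        linarith [h5]
      have hπ3 : 3 < Real.pi := Real.pi_gt_three
      have h6 : 0 ≤ σ^2 * (Real.pi - 3) := mul_nonneg (sq_nonneg σ) (by linarith)
      linarith [h6, sq_nonneg σ]
  · -- the case −ε < σ < 0 : contradiction via the sine window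
    have hεε0 : ε ≤ ε0 := min_le_left _ _
    have hεm : ε ≤ Real.sqrt m / 4 := le_trans (min_le_right _ _) (min_le_left _ _)
    have hεs : ε ≤ β * s0 / (2*sP+1) := le_trans (min_le_right _ _) (min_le_right _ _)
    have hrβ' : β ≤ r := by
      have h1 : (1:ℝ) ≤ Real.exp (-(σ*τ)) :=
        Real.one_le_exp (neg_nonneg.mpr (mul_nonpos_of_nonpos_of_nonneg hσ0.le hτ.le))
      rw [hrdef]
      exact le_mul_of_one_le_right hβ.le h1
    have hexpb : Real.exp (-(σ*τ)) ≤ 1 + m/(4*β) := by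
      have ha : (-σ)*τ ≤ ε*τ := mul_le_mul_of_nonneg_right (by linarith) hτ.le
      have hb : ε*τ ≤ ε0*τ := mul_le_mul_of_nonneg_right hεε0 hτ.le
      have h1 : -(σ*τ) ≤ ε0 * τ := by linarith [ha, hb]
      have h2 : Real.exp (ε0*τ) = 1 + m/(4*β) := by
        rw [hε0def, show τ⁻¹ * Real.log (1 + m/(4*β)) * τ = Real.log (1 + m/(4*β)) by
          field_simp]
        exact Real.exp_log (by positivity)
      calc Real.exp (-(σ*τ)) ≤ Real.exp (ε0*τ) := Real.exp_le_exp.mpr h1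
      _ = 1 + m/(4*β) := h2
    have hrup : r ≤ β + m/4 := by
      rw [hrdef]
      calc β * Real.exp (-(σ*τ)) ≤ β * (1 + m/(4*β)) :=
        mul_le_mul_of_nonneg_left hexpb hβ.le
      _ = β + m/4 := by field_simp
    have hσε : σ ^ 2 ≤ ε ^ 2 := by
      have h1 : (-σ)^2 ≤ ε^2 := pow_le_pow_left₀ (by linarith) (by linarith) 2
      linarith [h1]
    have hε2 : ε ^ 2 ≤ m/16 := by
      have h1 : ε ^ 2 ≤ (Real.sqrt m/4)^2 := pow_le_pow_left₀ hε0.le hεm 2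
      have h2 : (Real.sqrt m/4)^2 = m/16 := by
        rw [div_pow, Real.sq_sqrt hm0.le]; norm_num
      linarith
    have hYlow : K + m/2 ≤ Y ^ 2 := by linarith [sq_nonneg σ]
    have hYhigh : Y ^ 2 ≤ P - m/2 := by linarith
    have hYu : u ≤ Y*τ := by
      by_contra h
      push_neg at h
      have h1 : (Y*τ)^2 < u^2 := by
        have := pow_lt_pow_left₀ h (mul_nonneg hY0 hτ.le) two_ne_zero
        exact this
      have h2 : (K + m/2) * τ^2 ≤ Y^2 * τ^2 :=
        mul_le_mul_of_nonneg_right hYlow hτ2.le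
      linarith [hu2]
    have hYv : Y*τ ≤ v := by
      by_contra h
      push_neg at h
      have h1 : v^2 < (Y*τ)^2 := pow_lt_pow_left₀ h hv0 two_ne_zero
      have h2 : Y^2 * τ^2 ≤ (P - m/2) * τ^2 :=
        mul_le_mul_of_nonneg_right hYhigh hτ2.le
      linarith [hv2]
    have hθ1 : 0 < Y*τ - (k:ℝ)*Real.pi := by linarith
    have hθ2 : Y*τ - (k:ℝ)*Real.pi < Real.pi := by linarith
    have hsin := Real.sin_add_nat_mul_pi (Y*τ - (k:ℝ)*Real.pi) k
    rw [sub_add_cancel] at hsin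
    have hmem1 : u - (k:ℝ)*Real.pi ∈ Set.Icc 0 Real.pi := ⟨by linarith, by linarith⟩
    have hmem2 : v - (k:ℝ)*Real.pi ∈ Set.Icc 0 Real.pi := ⟨by linarith, by linarith⟩
    have hseg : Y*τ - (k:ℝ)*Real.pi ∈ segment ℝ (u - (k:ℝ)*Real.pi) (v - (k:ℝ)*Real.pi) := by
      rw [segment_eq_Icc (by linarith : u - (k:ℝ)*Real.pi ≤ v - (k:ℝ)*Real.pi)]
      exact ⟨by linarith, by linarith⟩
    have hsge := strictConcaveOn_sin_Icc.concaveOn.ge_on_segment hmem1 hmem2 hseg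
    have hs0θ : s0 ≤ Real.sin (Y*τ - (k:ℝ)*Real.pi) := by
      rw [hs0def]; exact hsge
    have h2 : 2*σ*Y = -(r * Real.sin (Y*τ - (k:ℝ)*Real.pi)) := by
      rw [hBY, hsin]
      linear_combination r * Real.sin (Y*τ - (k:ℝ)*Real.pi) * hc1k
    have hYsP : Y ≤ sP := by
      rw [hsPdef, show Y = Real.sqrt (Y^2) from (Real.sqrt_sq hY0).symm]
      exact Real.sqrt_le_sqrt (by linarith)
    have hfin1 : -(2*ε*sP) ≤ 2*σ*Y := by
      have ha : 0 ≤ (σ + ε) * Y := mul_nonneg (by linarith) hY0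
      have hb : ε*Y ≤ ε*sP := mul_le_mul_of_nonneg_left hYsP hε0.le
      linarith [ha, hb]
    have hfin2 : β * s0 ≤ r * Real.sin (Y*τ - (k:ℝ)*Real.pi) :=
      mul_le_mul hrβ' hs0θ hs0.le (le_trans hβ.le hrβ')
    have hfin3 : 2*ε*sP < β*s0 := by
      have hd : ε * (2*sP+1) ≤ β*s0 := (le_div_iff₀ (by positivity)).mp hεs
      linarith [hd]
    linarith
set_option maxHeartbeats 1000000 in
/-- Under condition (L), there is `ε > 0` such that every modal solution
`u(x,t) = c·exp(λt)·sin(nπx/ℓ)` associated with a root `λ` of the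
quasipolynomial decays exponentially: `|u(x,t)| ≤ |c|·exp(−εt)` for
`x ∈ [0,ℓ]`, `t ≥ 0`. -/
theorem stmt_16 (ℓ τ : ℝ) (hℓ : 0 < ℓ) (hτ : 0 < τ) (n : ℕ) (hn : 0 < n)
    (α : ℝ) (hα : α ≠ 0)
    (hL : ∃ k : ℕ, 0 < (-1 : ℝ) ^ (k + 1) * (ℓ ^ 2 * τ ^ 2 * α) ∧
      (-1 : ℝ) ^ (k + 1) * (ℓ ^ 2 * τ ^ 2 * α) <
        min ((n : ℝ) ^ 2 * Real.pi ^ 2 * τ ^ 2 - (k : ℝ) ^ 2 * ℓ ^ 2 * Real.pi ^ 2)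
          (((k : ℝ) + 1) ^ 2 * ℓ ^ 2 * Real.pi ^ 2 - (n : ℝ) ^ 2 * Real.pi ^ 2 * τ ^ 2)) :
    ∃ ε : ℝ, 0 < ε ∧
      ∀ lam : ℂ,
        lam ^ 2 + ((n : ℂ) ^ 2 * (Real.pi : ℂ) ^ 2 / (ℓ : ℂ) ^ 2) +
            (α : ℂ) * Complex.exp (-lam * (τ : ℂ)) = 0 →
          ∀ c : ℂ, ∀ x t : ℝ, x ∈ Set.Icc (0 : ℝ) ℓ → 0 ≤ t →
            ‖(c * Complex.exp (lam * (t : ℂ)) *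
                  Complex.sin ((n : ℂ) * (Real.pi : ℂ) * (x : ℂ) / (ℓ : ℂ)))‖ ≤
              ‖c‖ * Real.exp (-ε * t) := by
  obtain ⟨k, hL1, hL2⟩ := hL
  have hπ := Real.pi_pos
  have hℓ2 : (0:ℝ) < ℓ ^ 2 := by positivity
  have hτ2 : (0:ℝ) < τ ^ 2 := by positivity
  set β : ℝ := (-1:ℝ) ^ (k+1) * α with hβdef
  set ω2 : ℝ := (n:ℝ) ^ 2 * Real.pi ^ 2 / ℓ ^ 2 with hω2def
  have hβℓ : 0 < ℓ ^ 2 * τ ^ 2 * β := by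
    have h1 : ℓ ^ 2 * τ ^ 2 * β = (-1:ℝ) ^ (k+1) * (ℓ ^ 2 * τ ^ 2 * α) := by
      rw [hβdef]; ring
    rw [h1]; exact hL1
  have hβ : 0 < β := by
    by_contra h
    push_neg at h
    nlinarith [mul_pos hℓ2 hτ2]
  have hmin1 := (lt_min_iff.mp hL2).1
  have hmin2 := (lt_min_iff.mp hL2).2
  have hmin1' : ℓ ^ 2 * τ ^ 2 * β < (n:ℝ) ^ 2 * Real.pi ^ 2 * τ ^ 2 - (k:ℝ) ^ 2 * ℓ ^ 2 * Real.pi ^ 2 := by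
    calc ℓ ^ 2 * τ ^ 2 * β = (-1:ℝ) ^ (k+1) * (ℓ ^ 2 * τ ^ 2 * α) := by rw [hβdef]; ring
    _ < _ := hmin1
  have hmin2' : ℓ ^ 2 * τ ^ 2 * β < ((k:ℝ) + 1) ^ 2 * ℓ ^ 2 * Real.pi ^ 2 - (n:ℝ) ^ 2 * Real.pi ^ 2 * τ ^ 2 := by
    calc ℓ ^ 2 * τ ^ 2 * β = (-1:ℝ) ^ (k+1) * (ℓ ^ 2 * τ ^ 2 * α) := by rw [hβdef]; ring
    _ < _ := hmin2
  have hω2ℓτ : ω2 * ℓ ^ 2 * τ ^ 2 = (n:ℝ) ^ 2 * Real.pi ^ 2 * τ ^ 2 := by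
    rw [hω2def]; field_simp
  have hK : (k:ℝ) ^ 2 * Real.pi ^ 2 / τ ^ 2 < ω2 - β := by
    rw [div_lt_iff₀ hτ2]
    by_contra h
    push_neg at h
    have h2 := mul_le_mul_of_nonneg_right h hℓ2.le
    nlinarith [hmin1', hω2ℓτ]
  have hP : ω2 + β < ((k:ℝ) + 1) ^ 2 * Real.pi ^ 2 / τ ^ 2 := by
    rw [lt_div_iff₀ hτ2]
    by_contra h
    push_neg at h
    have h2 := mul_le_mul_of_nonneg_right h hℓ2.le
    nlinarith [hmin2', hω2ℓτ]
  obtain ⟨ε, hε, hroots⟩ := key_decay ω2 β τ k hτ hβ hK hP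
  refine ⟨ε, hε, ?_⟩
  intro lam hroot c x t hx ht
  have hcast : ((n:ℂ) ^ 2 * (Real.pi:ℂ) ^ 2 / (ℓ:ℂ) ^ 2) = ((ω2:ℝ):ℂ) := by
    rw [hω2def]; push_cast; ring
  rw [hcast] at hroot
  have hre := congrArg Complex.re hroot
  have him := congrArg Complex.im hroot
  simp only [pow_two, Complex.add_re, Complex.add_im, Complex.mul_re, Complex.mul_im,
    Complex.exp_re, Complex.exp_im, Complex.ofReal_re, Complex.ofReal_im,
    Complex.neg_re, Complex.neg_im, Complex.zero_re, Complex.zero_im,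
    mul_zero, zero_mul, sub_zero, add_zero, zero_add, zero_sub, neg_zero, neg_mul,
    mul_neg, neg_neg, Real.cos_neg, Real.sin_neg] at hre him
  have hc : (-1:ℝ) ^ (k+1) * β = α := by
    rw [hβdef]
    have h : ((-1:ℝ) ^ (k+1)) ^ 2 = 1 := by rw [← pow_mul, mul_comm, pow_mul]; norm_num
    linear_combination α * h
  have hA : lam.im ^ 2 - lam.re ^ 2 - ω2 =
      (-1:ℝ) ^ (k+1) * β * (Real.exp (-(lam.re * τ)) * Real.cos (lam.im * τ)) := by
    linear_combination (-1 : ℝ) * hre -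
      (Real.exp (-(lam.re * τ)) * Real.cos (lam.im * τ)) * hc
  have hB : 2 * lam.re * lam.im =
      (-1:ℝ) ^ (k+1) * β * (Real.exp (-(lam.re * τ)) * Real.sin (lam.im * τ)) := by
    linear_combination him - (Real.exp (-(lam.re * τ)) * Real.sin (lam.im * τ)) * hc
  have hσ : lam.re ≤ -ε := hroots lam.re lam.im hA hB
  have harg : (n:ℂ) * (Real.pi:ℂ) * (x:ℂ) / (ℓ:ℂ) = (((n:ℝ) * Real.pi * x / ℓ : ℝ):ℂ) := by
    push_cast; ring
  rw [harg, ← Complex.ofReal_sin, norm_mul, norm_mul, Complex.norm_real, Real.norm_eq_abs, Complex.norm_exp]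
  have h1 : (lam * (t:ℂ)).re = lam.re * t := by simp [Complex.mul_re]
  rw [h1]
  have h2 : |Real.sin ((n:ℝ) * Real.pi * x / ℓ)| ≤ 1 :=
    abs_le.mpr ⟨Real.neg_one_le_sin _, Real.sin_le_one _⟩
  have h3 : Real.exp (lam.re * t) ≤ Real.exp (-ε * t) := by
    apply Real.exp_le_exp.mpr
    have := mul_le_mul_of_nonneg_right hσ ht
    linarith [this]
  calc ‖c‖ * Real.exp (lam.re * t) * |Real.sin ((n:ℝ) * Real.pi * x / ℓ)|
      ≤ ‖c‖ * Real.exp (-ε * t) * 1 := by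
        apply mul_le_mul (mul_le_mul_of_nonneg_left h3 (norm_nonneg _)) h2
          (abs_nonneg _) (by positivity)
  _ = ‖c‖ * Real.exp (-ε * t) := mul_one _
end
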